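/- Let A = ⊕_{g∈G} A_g be an epsilon-strongly G-graded ring and R = A_1. Then for every g ∈ G the homogeneous component A_g, regarded as an R-bimodule via the multiplication of A, is a partially invertible R-bimodule; that is, A_g is finitely generated and projective both as a left R-module and as a right R-module, and the maps l : R → End((A_g)_R), l(r)(x) = rx, and r : R → End(_R(A_g)), r(r)(x) = xr, are surjective. -/

import Mathlib

/-!
Statement 0: For an epsilon-strongly `G`-graded ring `A = ⊕_{g ∈ G} A_g` with `R = A₁`,
every homogeneous component `A_g`, as an `R`-bimodule, is partially invertible.
-/

/-- A `G`-grading on a unital ring `A`: a family of additive subgroups with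
`A_g A_h ⊆ A_{gh}`, `1 ∈ A₁`, whose internal direct sum is `A`. -/
structure RingGrading (G : Type*) [Group G] [DecidableEq G]
    (A : Type*) [Ring A] where
  comp : G → AddSubgroup A
  one_mem : (1 : A) ∈ comp 1
  mul_mem : ∀ ⦃g h : G⦄ ⦃a b : A⦄, a ∈ comp g → b ∈ comp h → a * b ∈ comp (g * h)
  isInternal : DirectSum.IsInternal comp

variable {G : Type*} [Group G] [DecidableEq G] {A : Type*} [Ring A]

/-- The additive subgroup `S T` generated by products of elements of `S` and `T`. -/
def sgMul (S T : AddSubgroup A) : AddSubgroup A :=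
  AddSubgroup.closure {x : A | ∃ s ∈ S, ∃ t ∈ T, x = s * t}

/-- `ε` is a family of epsilon-elements for the grading `𝒜`:
`ε_g ∈ A_g A_{g⁻¹}` and `ε_g a = a = a ε_{g⁻¹}` for all `a ∈ A_g`. -/
structure IsEpsilonFamily (𝒜 : RingGrading G A) (ε : G → A) : Prop where
  mem : ∀ g : G, ε g ∈ sgMul (𝒜.comp g) (𝒜.comp g⁻¹)
  mul_left : ∀ g : G, ∀ a ∈ 𝒜.comp g, ε g * a = a
  mul_right : ∀ g : G, ∀ a ∈ 𝒜.comp g, a * ε g⁻¹ = a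

/-- `𝒜` is an epsilon-strongly graded ring. -/
def IsEpsilonStrong (𝒜 : RingGrading G A) : Prop :=
  ∃ ε : G → A, IsEpsilonFamily 𝒜 ε

/-- The base ring `R = A₁` as a subring of `A`. -/
def RingGrading.base (𝒜 : RingGrading G A) : Subring A where
  carrier := 𝒜.comp 1
  zero_mem' := zero_mem _
  one_mem' := 𝒜.one_mem
  add_mem' := fun ha hb => add_mem ha hb
  neg_mem' := fun ha => neg_mem ha
  mul_mem' := fun ha hb => by simpa using 𝒜.mul_mem ha hb

/-- The homogeneous component `A_g` as a left module over the base ring `R = A₁`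
(the left action being multiplication in `A`). -/
def RingGrading.compSub (𝒜 : RingGrading G A) (g : G) : Submodule ↥𝒜.base A where
  carrier := 𝒜.comp g
  zero_mem' := zero_mem _
  add_mem' := fun ha hb => add_mem ha hb
  smul_mem' := fun r a ha => by
    show (r : A) * a ∈ _
    simpa using 𝒜.mul_mem r.2 ha

/-- The right action of `R = A₁` on `A_g`, given by multiplication in `A`. -/
instance (𝒜 : RingGrading G A) (g : G) : SMul (↥𝒜.base)ᵐᵒᵖ ↥(𝒜.compSub g) :=
  ⟨fun r x => ⟨x.1 * (r.unop : A), show x.1 * (r.unop : A) ∈ 𝒜.comp g by simpa using 𝒜.mul_mem x.2 r.unop.2⟩⟩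

instance (𝒜 : RingGrading G A) (g : G) : Module (↥𝒜.base)ᵐᵒᵖ ↥(𝒜.compSub g) where
  one_smul x := Subtype.ext (mul_one x.1)
  mul_smul r s x := Subtype.ext (mul_assoc x.1 (s.unop : A) (r.unop : A)).symm
  smul_zero r := Subtype.ext (zero_mul _)
  smul_add r x y := Subtype.ext (add_mul x.1 y.1 _)
  add_smul r s x := Subtype.ext (by show x.1 * _ = x.1 * _ + x.1 * _; rw [← mul_add]; norm_num)
  zero_smul x := Subtype.ext (mul_zero x.1)

instance (𝒜 : RingGrading G A) (g : G) :
    SMulCommClass ↥𝒜.base (↥𝒜.base)ᵐᵒᵖ ↥(𝒜.compSub g) :=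
  ⟨fun r s x => Subtype.ext (mul_assoc (r : A) x.1 (s.unop : A)).symm⟩

/-- A partially invertible bimodule: finitely generated projective on both sides,
with the two regular representations `l : S → End(P_S)` and `r : S → End(_S P)`
surjective. -/
def PartiallyInvertible (S : Type*) [Ring S] (P : Type*) [AddCommGroup P]
    [Module S P] [Module Sᵐᵒᵖ P] [SMulCommClass S Sᵐᵒᵖ P] : Prop :=
  Module.Finite S P ∧ Module.Projective S P ∧
    Module.Finite Sᵐᵒᵖ P ∧ Module.Projective Sᵐᵒᵖ P ∧
    (∀ f : P →ₗ[Sᵐᵒᵖ] P, ∃ s : S, ∀ x : P, f x = s • x) ∧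
    (∀ f : P →ₗ[S] P, ∃ s : S, ∀ x : P, f x = MulOpposite.op s • x)

/-- Every element of `sgMul S T` is a finite sum of products. -/
theorem sgMul_repr {S T : AddSubgroup A} {x : A} (hx : x ∈ sgMul S T) :
    ∃ (n : ℕ) (u v : Fin n → A), (∀ i, u i ∈ S) ∧ (∀ i, v i ∈ T) ∧ x = ∑ i, u i * v i := by
  induction hx using AddSubgroup.closure_induction with
  | mem y hy =>
      obtain ⟨s, hs, t, ht, rfl⟩ := hy
      exact ⟨1, fun _ => s, fun _ => t, fun _ => hs, fun _ => ht, by simp⟩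
  | zero => exact ⟨0, Fin.elim0, Fin.elim0, fun i => i.elim0, fun i => i.elim0, by simp⟩
  | add a b ha hb iha ihb =>
      obtain ⟨n, u, v, hu, hv, rfl⟩ := iha
      obtain ⟨n', u', v', hu', hv', rfl⟩ := ihb
      refine ⟨n + n', Fin.append u u', Fin.append v v', fun i => ?_, fun i => ?_, ?_⟩
      · induction i using Fin.addCases with
        | left i => simpa [Fin.append_left] using hu i
        | right i => simpa [Fin.append_right] using hu' i
      · induction i using Fin.addCases with
        | left i => simpa [Fin.append_left] using hv i
        | right i => simpa [Fin.append_right] using hv' i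
      · simp [Fin.sum_univ_add, Fin.append_left, Fin.append_right]
  | neg a ha iha =>
      obtain ⟨n, u, v, hu, hv, rfl⟩ := iha
      exact ⟨n, fun i => -u i, v, fun i => neg_mem (hu i), hv, by
        simp [neg_mul, Finset.sum_neg_distrib]⟩


open MulOpposite

set_option synthInstance.maxHeartbeats 1000000

/-- If `A` is epsilon-strongly `G`-graded with `R = A₁`, then each
homogeneous component `A_g`, as an `R`-bimodule, is partially invertible;
in particular `[A_g] ∈ PicS(R)`. -/
theorem component_partiallyInvertible (𝒜 : RingGrading G A)
    (h : IsEpsilonStrong 𝒜) (g : G) :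
    PartiallyInvertible ↥𝒜.base ↥(𝒜.compSub g) := by
  classical
  obtain ⟨ε, hε⟩ := h
  obtain ⟨n, u, v, hu, hv, huv⟩ := sgMul_repr (hε.mem g)
  obtain ⟨m, w, z, hw, hz0, hwz⟩ := sgMul_repr (hε.mem g⁻¹)
  have hz : ∀ j, z j ∈ 𝒜.comp g := by intro j; simpa using hz0 j
  have memg : ∀ x : ↥(𝒜.compSub g), x.1 ∈ 𝒜.comp g := fun x => x.2
  let U : Fin n → ↥(𝒜.compSub g) := fun i => ⟨u i, hu i⟩
  let Z : Fin m → ↥(𝒜.compSub g) := fun j => ⟨z j, hz j⟩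
  have hvx : ∀ (i : Fin n) (x : ↥(𝒜.compSub g)), v i * x.1 ∈ 𝒜.base := fun i x => by
    show _ ∈ 𝒜.comp 1; simpa using 𝒜.mul_mem (hv i) (memg x)
  have hxw : ∀ (j : Fin m) (x : ↥(𝒜.compSub g)), x.1 * w j ∈ 𝒜.base := fun j x => by
    show _ ∈ 𝒜.comp 1; simpa using 𝒜.mul_mem (memg x) (hw j)
  -- key identities
  have keyR : ∀ x : ↥(𝒜.compSub g),
      x = ∑ i, op (⟨v i * x.1, hvx i x⟩ : ↥𝒜.base) • U i := by
    intro x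
    apply Subtype.ext
    calc x.1 = (∑ i, u i * v i) * x.1 := by
          rw [← huv, hε.mul_left g x.1 (memg x)]
      _ = ∑ i, u i * (v i * x.1) := by rw [Finset.sum_mul]; simp [mul_assoc]
      _ = _ := by
          rw [AddSubmonoidClass.coe_finset_sum]
          exact Finset.sum_congr rfl fun i _ => rfl
  have keyL : ∀ x : ↥(𝒜.compSub g),
      x = ∑ j, (⟨x.1 * w j, hxw j x⟩ : ↥𝒜.base) • Z j := by
    intro x
    apply Subtype.ext
    calc x.1 = x.1 * (∑ j, w j * z j) := by
          rw [← hwz, hε.mul_right g x.1 (memg x)]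
      _ = ∑ j, (x.1 * w j) * z j := by rw [Finset.mul_sum]; simp [mul_assoc]
      _ = _ := by
          rw [AddSubmonoidClass.coe_finset_sum]
          exact Finset.sum_congr rfl fun j _ => rfl
  -- linear maps for the right module structure
  let σR : ↥(𝒜.compSub g) →ₗ[(↥𝒜.base)ᵐᵒᵖ] (Fin n → (↥𝒜.base)ᵐᵒᵖ) :=
    { toFun := fun x i => op (⟨v i * x.1, hvx i x⟩ : ↥𝒜.base)
      map_add' := fun x y => funext fun i => by
        apply unop_injective; apply Subtype.ext
        show v i * (x.1 + y.1) = v i * x.1 + v i * y.1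
        rw [mul_add]
      map_smul' := fun r x => funext fun i => by
        apply unop_injective; apply Subtype.ext
        show v i * (x.1 * (r.unop : A)) = (v i * x.1) * (r.unop : A)
        rw [mul_assoc] }
  let πR : (Fin n → (↥𝒜.base)ᵐᵒᵖ) →ₗ[(↥𝒜.base)ᵐᵒᵖ] ↥(𝒜.compSub g) :=
    { toFun := fun c => ∑ i, c i • U i
      map_add' := fun c d => by simp [add_smul, Finset.sum_add_distrib]
      map_smul' := fun r c => by
        simp [Finset.smul_sum, mul_smul] }
  have hsecR : ∀ x, πR (σR x) = x := fun x => (keyR x).symm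
  -- linear maps for the left module structure
  let σL : ↥(𝒜.compSub g) →ₗ[↥𝒜.base] (Fin m → ↥𝒜.base) :=
    { toFun := fun x j => (⟨x.1 * w j, hxw j x⟩ : ↥𝒜.base)
      map_add' := fun x y => funext fun j => by
        apply Subtype.ext
        show (x.1 + y.1) * w j = x.1 * w j + y.1 * w j
        rw [add_mul]
      map_smul' := fun r x => funext fun j => by
        apply Subtype.ext
        show ((r : A) * x.1) * w j = (r : A) * (x.1 * w j)
        rw [mul_assoc] }
  let πL : (Fin m → ↥𝒜.base) →ₗ[↥𝒜.base] ↥(𝒜.compSub g) :=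
    { toFun := fun c => ∑ j, c j • Z j
      map_add' := fun c d => by simp [add_smul, Finset.sum_add_distrib]
      map_smul' := fun r c => by
        simp [Finset.smul_sum, mul_smul] }
  have hsecL : ∀ x, πL (σL x) = x := fun x => (keyL x).symm
  refine ⟨Module.Finite.of_surjective πL (fun x => ⟨σL x, hsecL x⟩),
    Module.Projective.of_split σL πL (LinearMap.ext hsecL),
    Module.Finite.of_surjective πR (fun x => ⟨σR x, hsecR x⟩),
    Module.Projective.of_split σR πR (LinearMap.ext hsecR), ?_, ?_⟩
  · -- l surjective
    intro f
    refine ⟨⟨∑ i, (f (U i)).1 * v i,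
      sum_mem fun i _ => by show _ ∈ 𝒜.comp 1; simpa using 𝒜.mul_mem (memg (f (U i))) (hv i)⟩, fun x => ?_⟩
    have h1 : f x = ∑ i, op (⟨v i * x.1, hvx i x⟩ : ↥𝒜.base) • f (U i) := by
      conv_lhs => rw [keyR x]
      rw [map_sum]
      exact Finset.sum_congr rfl fun i _ => f.map_smul _ _
    apply Subtype.ext
    rw [h1]
    calc (↑(∑ i, op (⟨v i * x.1, hvx i x⟩ : ↥𝒜.base) • f (U i)) : A)
        = ∑ i, (f (U i)).1 * (v i * x.1) := by
          rw [AddSubmonoidClass.coe_finset_sum]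
          exact Finset.sum_congr rfl fun i _ => rfl
      _ = (∑ i, (f (U i)).1 * v i) * x.1 := by rw [Finset.sum_mul]; simp [mul_assoc]
  · -- r surjective
    intro f
    refine ⟨⟨∑ j, w j * (f (Z j)).1,
      sum_mem fun j _ => by show _ ∈ 𝒜.comp 1; simpa using 𝒜.mul_mem (hw j) (memg (f (Z j)))⟩, fun x => ?_⟩
    have h1 : f x = ∑ j, (⟨x.1 * w j, hxw j x⟩ : ↥𝒜.base) • f (Z j) := by
      conv_lhs => rw [keyL x]
      rw [map_sum]
      exact Finset.sum_congr rfl fun j _ => f.map_smul _ _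
    apply Subtype.ext
    rw [h1]
    calc (↑(∑ j, (⟨x.1 * w j, hxw j x⟩ : ↥𝒜.base) • f (Z j)) : A)
        = ∑ j, (x.1 * w j) * (f (Z j)).1 := by
          rw [AddSubmonoidClass.coe_finset_sum]
          exact Finset.sum_congr rfl fun j _ => rfl
      _ = x.1 * (∑ j, w j * (f (Z j)).1) := by rw [Finset.mul_sum]; simp [mul_assoc]
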